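/- Let (Ω, 𝒜, P) be a probability space and X, Y : Ω → ℝ random variables with Y non-degenerate. For p ∈ [1,∞) define Λ_p(Y|X) := I_p / α_p with I_p := ∫_{ℝ×ℝ} ∫_ℝ |F_{Y|X=x₁}(y) − F_{Y|X=x₂}(y)|^p dP^Y(y) d(P^X ⊗ P^X)(x₁,x₂) and α_p := ∫_{ℝ×ℝ} ∫_ℝ |𝟙_{\{y₁ ≤ y\}} − 𝟙_{\{y₂ ≤ y\}}|^p dP^Y(y) d(P^Y ⊗ P^Y)(y₁,y₂). Then α_p = α_1 > 0 for every p ≥ 1 (the normalizing constant does not depend on p), and for all 1 ≤ p ≤ q one has Λ_q(Y|X) ≤ Λ_p(Y|X); i.e., p ↦ Λ_p(Y|X) is decreasing on [1,∞). -/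

import Mathlib

open MeasureTheory ProbabilityTheory Filter Set
open scoped ENNReal Topology

/-- The numerator `I_p` of the L^p dependence measure `Λ_p`. -/
noncomputable def lambdaNum (νX νY : MeasureTheory.Measure ℝ)
    (κ : ProbabilityTheory.Kernel ℝ ℝ) (p : ℝ) : ℝ :=
  ∫ x : ℝ × ℝ,
    (∫ y, |(κ x.1 (Set.Iic y)).toReal - (κ x.2 (Set.Iic y)).toReal| ^ p ∂νY)
    ∂(νX.prod νX)

/-- The normalizing constant `α_p` of the L^p dependence measure `Λ_p`. -/
noncomputable def lambdaDen (νY : MeasureTheory.Measure ℝ) (p : ℝ) : ℝ :=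
  ∫ q : ℝ × ℝ,
    (∫ y, |(if q.1 ≤ y then (1 : ℝ) else 0) - (if q.2 ≤ y then (1 : ℝ) else 0)| ^ p ∂νY)
    ∂(νY.prod νY)

/-!
The integrand of `α_p` takes only the values `0` and `1`, so the exponent `p` does not matter.
The integrand of `I_p` lies in `[0, 1]`, where `x ^ q ≤ x ^ p` for `0 ≤ p ≤ q`, so `I_p` is
antitone in `p`. For `α_1 > 0`: the inner integral at `(y₁, y₂)` is the mass of
`[min y₁ y₂, max y₁ y₂)`. A non-Dirac law charges both `(-∞, t]` and `(t, ∞)` for some `t`,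
and for `ν`-a.e. `y₁ ≤ t` the interval `[y₁, t]` has positive mass, so the inner integral is
positive on a product set of positive measure.
-/

/-- A point `y` with `μ (Ici y) = 0` either lies above such a point of a countable dense set, or
is the least such point. -/
lemma ae_measure_Ici_pos {α : Type*} [LinearOrder α] [TopologicalSpace α] [OrderTopology α]
    [DenselyOrdered α] [TopologicalSpace.SeparableSpace α] [MeasurableSpace α] (μ : Measure α) :
    ∀ᵐ y ∂μ, 0 < μ (Ici y) := by
  set N := {y | μ (Ici y) = 0}
  obtain ⟨D, hDc, hDd⟩ := TopologicalSpace.exists_countable_dense α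
  set M := {y ∈ N | ∀ z ∈ N, y ≤ z}
  have hcover : N ⊆ (⋃ d ∈ D ∩ N, Ici d) ∪ M := by
    intro y hy
    by_cases hmin : ∀ z ∈ N, y ≤ z
    · exact Or.inr ⟨hy, hmin⟩
    push Not at hmin
    obtain ⟨z, hz, hzy⟩ := hmin
    obtain ⟨d, hdD, hzd, hdy⟩ := hDd.exists_between hzy
    exact Or.inl (mem_biUnion ⟨hdD, measure_mono_null (Ici_subset_Ici.2 hzd.le) hz⟩ hdy.le)
  have hM : μ M = 0 := by
    rcases M.eq_empty_or_nonempty with h | ⟨y, hyN, hy⟩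
    · simp [h]
    · exact measure_mono_null (fun z hz => hy z hz.1) hyN
  have hN : μ N = 0 :=
    measure_mono_null hcover <| measure_union_null
      ((measure_biUnion_null_iff (hDc.mono inter_subset_left)).2 fun d hd => hd.2) hM
  simpa [ae_iff, pos_iff_ne_zero] using hN

lemma exists_measure_Iic_pos_measure_Ioi_pos (ν : Measure ℝ) [IsProbabilityMeasure ν]
    (hν : ∀ c, ν ≠ Measure.dirac c) : ∃ t, 0 < ν (Iic t) ∧ 0 < ν (Ioi t) := by
  have separated : ∀ a ∈ ν.support, ∀ b ∈ ν.support, a < b →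
      ∃ t, 0 < ν (Iic t) ∧ 0 < ν (Ioi t) := by
    intro a ha b hb hab
    obtain ⟨t, hat, htb⟩ := exists_between hab
    exact ⟨t, ((Measure.mem_support_iff_forall a).1 ha _ (Iio_mem_nhds hat)).trans_le
      (measure_mono Iio_subset_Iic_self),
      (Measure.mem_support_iff_forall b).1 hb _ (Ioi_mem_nhds htb)⟩
  obtain ⟨a, ha⟩ := Measure.nonempty_support (IsProbabilityMeasure.ne_zero ν)
  obtain ⟨b, hb, hba⟩ : ∃ b ∈ ν.support, b ≠ a := by
    by_contra! h
    have hae : ∀ᵐ y ∂ν, y ∈ ({a} : Finset ℝ) := by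
      filter_upwards [Measure.support_mem_ae] with y hy using by simpa using h y hy
    have hdirac := Measure.ae_mem_finset_iff.1 hae
    have h1 : ν {a} = 1 := by
      rw [← measure_univ (μ := ν), hdirac]
      simp
    exact hν a (by simpa [h1] using hdirac)
  rcases hba.lt_or_gt with h | h
  · exact separated b hb a ha h
  · exact separated a ha b hb h

lemma integrable_rpow_of_le_one {α : Type*} [MeasurableSpace α] {μ : Measure α}
    [IsFiniteMeasure μ] {f : α → ℝ} (hf : Measurable f) (h0 : ∀ x, 0 ≤ f x) (h1 : ∀ x, f x ≤ 1)
    {p : ℝ} (hp : 0 ≤ p) : Integrable (fun x => f x ^ p) μ := by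
  refine Integrable.of_bound (hf.pow_const p).aestronglyMeasurable 1 (ae_of_all _ fun x => ?_)
  rw [Real.norm_eq_abs, abs_of_nonneg (Real.rpow_nonneg (h0 x) p)]
  exact Real.rpow_le_one (h0 x) (h1 x) hp

lemma integral_rpow_le_integral_rpow_of_exponent_ge {α : Type*} [MeasurableSpace α]
    {μ : Measure α} [IsFiniteMeasure μ] {f : α → ℝ} (hf : Measurable f) (h0 : ∀ x, 0 ≤ f x)
    (h1 : ∀ x, f x ≤ 1) {p q : ℝ} (hp : 0 ≤ p) (hpq : p ≤ q) :
    ∫ x, f x ^ q ∂μ ≤ ∫ x, f x ^ p ∂μ :=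
  integral_mono_of_nonneg (ae_of_all _ fun x => Real.rpow_nonneg (h0 x) q)
    (integrable_rpow_of_le_one hf h0 h1 hp)
    (ae_of_all _ fun x => Real.rpow_le_rpow_of_exponent_ge' (h0 x) (h1 x) hp hpq)

lemma measurable_kernel_apply_Iic {α : Type*} [MeasurableSpace α] (κ : Kernel α ℝ)
    [IsSFiniteKernel κ] : Measurable fun z : α × ℝ => κ z.1 (Iic z.2) :=
  Kernel.measurable_kernel_prodMk_left (κ := κ.comap Prod.fst measurable_fst)
    (measurableSet_le measurable_snd measurable_fst.snd)

lemma abs_ite_le_sub_ite_le (a b y : ℝ) :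
    |(if a ≤ y then (1 : ℝ) else 0) - (if b ≤ y then (1 : ℝ) else 0)| =
      (Ico (min a b) (max a b)).indicator 1 y := by
  by_cases ha : a ≤ y <;> by_cases hb : b ≤ y <;> simp [ha, hb, indicator]

lemma integral_abs_ite_le_sub_ite_le (ν : Measure ℝ) (a b : ℝ) :
    ∫ y, |(if a ≤ y then (1 : ℝ) else 0) - (if b ≤ y then (1 : ℝ) else 0)| ∂ν =
      ν.real (Ico (min a b) (max a b)) := by
  simp_rw [abs_ite_le_sub_ite_le]
  exact integral_indicator_one measurableSet_Ico

lemma lambdaDen_eq_lambdaDen_one (ν : Measure ℝ) {p : ℝ} (hp : p ≠ 0) :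
    lambdaDen ν p = lambdaDen ν 1 := by
  unfold lambdaDen
  congr 1 with q
  congr 1 with y
  split_ifs <;> simp [hp]

lemma integrable_integral_abs_ite_le_sub_ite_le (μ : Measure (ℝ × ℝ)) (ν : Measure ℝ)
    [IsFiniteMeasure μ] [IsFiniteMeasure ν] :
    Integrable (fun q : ℝ × ℝ =>
      ∫ y, |(if q.1 ≤ y then (1 : ℝ) else 0) - (if q.2 ≤ y then (1 : ℝ) else 0)| ∂ν) μ := by
  refine Integrable.integral_prod_left (Integrable.of_bound (μ := μ.prod ν)
    (f := fun z : (ℝ × ℝ) × ℝ =>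
      |(if z.1.1 ≤ z.2 then (1 : ℝ) else 0) - (if z.1.2 ≤ z.2 then (1 : ℝ) else 0)|)
    ?_ 1 (ae_of_all _ fun z => ?_))
  · exact (((measurable_const.ite (measurableSet_le (by fun_prop) (by fun_prop))
      measurable_const).sub (measurable_const.ite (measurableSet_le (by fun_prop) (by fun_prop))
      measurable_const)).abs).aestronglyMeasurable
  · rw [Real.norm_eq_abs, abs_abs]
    split_ifs <;> norm_num

lemma measureReal_Icc_le_integral_abs_ite_le_sub_ite_le (ν : Measure ℝ) [IsFiniteMeasure ν]
    {y₁ t y₂ : ℝ} (h₁ : y₁ ≤ t) (h₂ : t < y₂) :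
    ν.real (Icc y₁ t) ≤
      ∫ y, |(if y₁ ≤ y then (1 : ℝ) else 0) - (if y₂ ≤ y then (1 : ℝ) else 0)| ∂ν := by
  rw [integral_abs_ite_le_sub_ite_le, min_eq_left (h₁.trans h₂.le), max_eq_right (h₁.trans h₂.le)]
  exact measureReal_mono (Icc_subset_Ico_right h₂)

lemma lambdaDen_one_pos (ν : Measure ℝ) [IsProbabilityMeasure ν]
    (hν : ∀ c, ν ≠ Measure.dirac c) : 0 < lambdaDen ν 1 := by
  obtain ⟨t, hleft, hright⟩ := exists_measure_Iic_pos_measure_Ioi_pos ν hν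
  set μ := ν.restrict (Iic t)
  have hμ : ∀ y, μ (Ici y) = ν (Icc y t) := fun y => by
    rw [Measure.restrict_apply measurableSet_Ici, Ici_inter_Iic]
  have hsupp : {y | 0 < μ (Ici y)} ×ˢ Ioi t ⊆ Function.support fun q : ℝ × ℝ =>
      ∫ y, |(if q.1 ≤ y then (1 : ℝ) else 0) - (if q.2 ≤ y then (1 : ℝ) else 0)| ∂ν := by
    rintro ⟨y₁, y₂⟩ ⟨hy₁ : 0 < μ (Ici y₁), hy₂ : t < y₂⟩
    rw [hμ] at hy₁
    have hy₁t : y₁ ≤ t := by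
      by_contra h
      simp [Icc_eq_empty h] at hy₁
    exact ne_of_gt <| (ENNReal.toReal_pos hy₁.ne' (measure_ne_top _ _)).trans_le
      (measureReal_Icc_le_integral_abs_ite_le_sub_ite_le ν hy₁t hy₂)
  have hfirst : 0 < ν {y | 0 < μ (Ici y)} :=
    calc 0 < ν (Iic t) := hleft
      _ = μ {y | 0 < μ (Ici y)} := by
        rw [measure_congr (ae_eq_univ.2 (ae_measure_Ici_pos μ)), Measure.restrict_apply_univ]
      _ ≤ ν {y | 0 < μ (Ici y)} := Measure.restrict_apply_le _ _
  unfold lambdaDen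
  simp only [Real.rpow_one]
  refine (integral_pos_iff_support_of_nonneg (fun q => integral_nonneg fun y => abs_nonneg _)
    (integrable_integral_abs_ite_le_sub_ite_le _ ν)).2 ?_
  calc 0 < ν {y | 0 < μ (Ici y)} * ν (Ioi t) := ENNReal.mul_pos hfirst.ne' hright.ne'
    _ = (ν.prod ν) ({y | 0 < μ (Ici y)} ×ˢ Ioi t) := (Measure.prod_prod _ _).symm
    _ ≤ _ := measure_mono hsupp

/-- The integrand `|F_{Y|X=x₁}(y) - F_{Y|X=x₂}(y)|` of `lambdaNum`, at `z = ((x₁, x₂), y)`. -/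
noncomputable def cdfGap (κ : Kernel ℝ ℝ) (z : (ℝ × ℝ) × ℝ) : ℝ :=
  |(κ z.1.1 (Iic z.2)).toReal - (κ z.1.2 (Iic z.2)).toReal|

lemma measurable_cdfGap (κ : Kernel ℝ ℝ) [IsSFiniteKernel κ] : Measurable (cdfGap κ) := by
  have h := (measurable_kernel_apply_Iic κ).ennreal_toReal
  exact ((h.comp (measurable_fst.fst.prodMk measurable_snd)).sub
    (h.comp (measurable_fst.snd.prodMk measurable_snd))).abs

lemma cdfGap_le_one (κ : Kernel ℝ ℝ) [IsMarkovKernel κ] (z : (ℝ × ℝ) × ℝ) : cdfGap κ z ≤ 1 :=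
  abs_sub_le_of_nonneg_of_le ENNReal.toReal_nonneg measureReal_le_one
    ENNReal.toReal_nonneg measureReal_le_one

lemma lambdaNum_eq_integral_cdfGap_rpow (μ ν : Measure ℝ) [IsFiniteMeasure μ] [IsFiniteMeasure ν]
    (κ : Kernel ℝ ℝ) [IsMarkovKernel κ] {p : ℝ} (hp : 0 ≤ p) :
    lambdaNum μ ν κ p = ∫ z, cdfGap κ z ^ p ∂((μ.prod μ).prod ν) :=
  (integral_prod _ (integrable_rpow_of_le_one (measurable_cdfGap κ) (fun _ => abs_nonneg _)
    (cdfGap_le_one κ) hp)).symm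

lemma lambdaNum_antitoneOn (μ ν : Measure ℝ) [IsFiniteMeasure μ] [IsFiniteMeasure ν]
    (κ : Kernel ℝ ℝ) [IsMarkovKernel κ] : AntitoneOn (lambdaNum μ ν κ) (Ici 0) := by
  intro p hp q hq hpq
  rw [lambdaNum_eq_integral_cdfGap_rpow μ ν κ hp, lambdaNum_eq_integral_cdfGap_rpow μ ν κ hq]
  exact integral_rpow_le_integral_rpow_of_exponent_ge (measurable_cdfGap κ)
    (fun _ => abs_nonneg _) (cdfGap_le_one κ) hp hpq

theorem stmt17_general {Ω : Type*} [MeasurableSpace Ω] (P : Measure Ω) [IsProbabilityMeasure P]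
    (X Y : Ω → ℝ) (hY : Measurable Y)
    (hYnondeg : ∀ c : ℝ, P.map Y ≠ Measure.dirac c)
    (κ : Kernel ℝ ℝ) [IsMarkovKernel κ] :
    (∀ p : ℝ, 1 ≤ p → lambdaDen (P.map Y) p = lambdaDen (P.map Y) 1) ∧
    0 < lambdaDen (P.map Y) 1 ∧
    ∀ p q : ℝ, 1 ≤ p → p ≤ q →
      lambdaNum (P.map X) (P.map Y) κ q / lambdaDen (P.map Y) q ≤
        lambdaNum (P.map X) (P.map Y) κ p / lambdaDen (P.map Y) p := by
  have : IsProbabilityMeasure (P.map Y) := Measure.isProbabilityMeasure_map hY.aemeasurable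
  have hden : ∀ p : ℝ, 1 ≤ p → lambdaDen (P.map Y) p = lambdaDen (P.map Y) 1 :=
    fun p hp => lambdaDen_eq_lambdaDen_one _ (by linarith)
  have hpos := lambdaDen_one_pos _ hYnondeg
  refine ⟨hden, hpos, fun p q hp hpq => ?_⟩
  rw [hden p hp, hden q (hp.trans hpq)]
  gcongr
  exact lambdaNum_antitoneOn _ _ κ (show (0 : ℝ) ≤ p by linarith)
    (show (0 : ℝ) ≤ q by linarith) hpq

/-- The normalizing constant α_p does not depend on p and is
positive, and p ↦ Λ_p(Y|X) = I_p/α_p is decreasing on [1,∞). -/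
theorem stmt17 {Ω : Type*} [MeasurableSpace Ω] (P : Measure Ω) [IsProbabilityMeasure P]
    (X Y : Ω → ℝ) (hX : Measurable X) (hY : Measurable Y)
    (hYnondeg : ∀ c : ℝ, P.map Y ≠ Measure.dirac c)
    (κ : Kernel ℝ ℝ) [IsMarkovKernel κ]
    (hκ : ∀ A B : Set ℝ, MeasurableSet A → MeasurableSet B →
      P.map (fun ω => (X ω, Y ω)) (A ×ˢ B) = ∫⁻ x in A, κ x B ∂(P.map X)) :
    (∀ p : ℝ, 1 ≤ p → lambdaDen (P.map Y) p = lambdaDen (P.map Y) 1) ∧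
    0 < lambdaDen (P.map Y) 1 ∧
    ∀ p q : ℝ, 1 ≤ p → p ≤ q →
      lambdaNum (P.map X) (P.map Y) κ q / lambdaDen (P.map Y) q ≤
        lambdaNum (P.map X) (P.map Y) κ p / lambdaDen (P.map Y) p :=
  stmt17_general P X Y hY hYnondeg κ
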